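/- Let (T'_0, T'_1, ..., T'_r) be a sequence of pairwise non-isomorphic indecomposable H-modules over a hereditary algebra H, and set T = T'_0[0] ⊕ T'_1[1] ⊕ ... ⊕ T'_r[r] in D^b(H). Then (T'_0,...,T'_r) is an exceptional sequence if and only if T is a partial silting object. -/
import Mathlib


open CategoryTheory Opposite

noncomputable section

/-- `Ext^n` over the base field `k` for modules over a `k`-algebra `A`. -/
abbrev ModExt (k : Type) [Field k] (A : Type) [Ring A] [Algebra k A]
    (n : ℕ) (X Y : ModuleCat.{0} A) : ModuleCat k :=
  ((Ext k (ModuleCat.{0} A) n).obj (op X)).obj Y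

/-- A finite dimensional algebra is hereditary if `Ext^n` vanishes for all `n ≥ 2`. -/
def IsHereditaryAlg (k : Type) [Field k] (A : Type) [Ring A] [Algebra k A] : Prop :=
  ∀ (X Y : ModuleCat.{0} A) (n : ℕ), 2 ≤ n → Subsingleton (ModExt k A n X Y)

/-- An exceptional module: indecomposable with no self-extensions. -/
def IsExceptionalMod (k : Type) [Field k] (A : Type) [Ring A] [Algebra k A]
    (X : ModuleCat.{0} A) : Prop :=
  Indecomposable X ∧ Subsingleton (ModExt k A 1 X X)

/-- An exceptional sequence `(E 0, …, E (r-1))`: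
all terms exceptional, and `Hom(E j, E i) = 0 = Ext¹(E j, E i)` for `j > i`. -/
def IsExceptionalSeq (k : Type) [Field k] (A : Type) [Ring A] [Algebra k A]
    {r : ℕ} (E : Fin r → ModuleCat.{0} A) : Prop :=
  (∀ i, IsExceptionalMod k A (E i)) ∧
    ∀ i j : Fin r, i < j →
      Subsingleton (E j ⟶ E i) ∧ Subsingleton (ModExt k A 1 (E j) (E i))
/-- Vanishing of `Hom_{D^b(A)}(X[a], Y[b]) ≅ Ext^{b-a}_A(X, Y)`:
for a degree `d = b - a`, the group `Ext^d(X,Y)` vanishes (this is automatic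
for `d < 0`, since `X`, `Y` are modules). -/
def DHomVanish (k : Type) [Field k] (A : Type) [Ring A] [Algebra k A]
    (d : ℤ) (X Y : ModuleCat.{0} A) : Prop :=
  ∀ n : ℕ, (n : ℤ) = d → Subsingleton (ModExt k A n X Y)

/-- The object `⊕ i, (M i)[s i]` of `D^b(A)` is partial silting:
`Hom_D(T, T[t]) = 0` for all `t > 0`. -/
def StalkPartialSilting (k : Type) [Field k] (A : Type) [Ring A] [Algebra k A]
    {r : ℕ} (M : Fin r → ModuleCat.{0} A) (s : Fin r → ℤ) : Prop :=
  ∀ t : ℤ, 0 < t → ∀ i j, DHomVanish k A (s j + t - s i) (M i) (M j)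

/-- The summands `(M i)[s i]` are pairwise non-isomorphic in `D^b(A)`. -/
def StalkBasic (A : Type) [Ring A]
    {r : ℕ} (M : Fin r → ModuleCat.{0} A) (s : Fin r → ℤ) : Prop :=
  ∀ i j, i ≠ j → ¬ (s i = s j ∧ Nonempty (M i ≅ M j))

/-- The object `⊕ i, (M i)[s i]` of `D^b(A)` is a silting object: it is basic
with indecomposable summands, partial silting, and maximal with this property. -/
def StalkSilting (k : Type) [Field k] (A : Type) [Ring A] [Algebra k A]
    {r : ℕ} (M : Fin r → ModuleCat.{0} A) (s : Fin r → ℤ) : Prop :=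
  (∀ i, Indecomposable (M i)) ∧ StalkBasic A M s ∧ StalkPartialSilting k A M s ∧
    ∀ (X : ModuleCat.{0} A) (a : ℤ), Indecomposable X →
      StalkPartialSilting k A (Fin.cons X M) (Fin.cons a s) →
      ∃ i, s i = a ∧ Nonempty (X ≅ M i)


section Aux

open Limits

variable (k : Type) [Field k] (A : Type) [Ring A] [Algebra k A]

lemma linearYonedaObj_preservesFiniteLimits (Y : ModuleCat.{0} A) :
    PreservesFiniteLimits ((linearYoneda k (ModuleCat.{0} A)).obj Y) := by
  have h : (linearYoneda k (ModuleCat.{0} A)).obj Y ⋙ forget (ModuleCat k) = yoneda.obj Y :=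
    Functor.congr_obj (whiskering_linearYoneda k (ModuleCat.{0} A)) Y
  have : PreservesFiniteLimits
      ((linearYoneda k (ModuleCat.{0} A)).obj Y ⋙ forget (ModuleCat k)) := by
    rw [h]; infer_instance
  exact preservesFiniteLimits_of_reflects_of_preserves _ (forget (ModuleCat k))

/-- `Ext^0 X Y ≃ Hom(X, Y)`. -/
def ext0Equiv (X Y : ModuleCat.{0} A) : (ModExt k A 0 X Y : Type) ≃ (X ⟶ Y) := by
  have := linearYonedaObj_preservesFiniteLimits k A Y
  have : PreservesFiniteColimits ((linearYoneda k (ModuleCat.{0} A)).obj Y).rightOp :=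
    preservesFiniteColimits_rightOp _
  have e := (((linearYoneda k (ModuleCat.{0} A)).obj Y).rightOp.leftDerivedZeroIsoSelf.app X).unop
  exact e.symm.toLinearEquiv.toEquiv

lemma subsingleton_ext0_iff (X Y : ModuleCat.{0} A) :
    Subsingleton (ModExt k A 0 X Y) ↔ Subsingleton (X ⟶ Y) :=
  (ext0Equiv k A X Y).subsingleton_congr

end Aux

/-- for pairwise non-isomorphic indecomposables `T'_0, …, T'_r`,
`(T'_0, …, T'_r)` is an exceptional sequence iff
`T'_0[0] ⊕ T'_1[1] ⊕ … ⊕ T'_r[r]` is partial silting. -/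
theorem stmt8 (k : Type) [Field k] (A : Type) [Ring A] [Algebra k A]
    [FiniteDimensional k A] (hA : IsHereditaryAlg k A)
    {r : ℕ} (T : Fin (r + 1) → ModuleCat.{0} A)
    (hind : ∀ i, Indecomposable (T i))
    (hdist : ∀ i j, i ≠ j → IsEmpty (T i ≅ T j)) :
    IsExceptionalSeq k A T ↔ StalkPartialSilting k A T (fun i => (i : ℤ)) := by
  have hsub := subsingleton_ext0_iff k A
  constructor
  · rintro ⟨h1, h2⟩ t ht i j n hn
    simp only at hn
    match n, hn with
    | 0, hn =>
      have hji : j < i := by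
        rw [Fin.lt_def]; omega
      exact (hsub _ _).2 (h2 j i hji).1
    | 1, hn =>
      rcases eq_or_lt_of_le (show j ≤ i by rw [Fin.le_def]; omega) with hji | hji
      · subst hji; exact (h1 j).2
      · exact (h2 j i hji).2
    | (n + 2), hn => exact hA _ _ _ (by omega)
  · intro h
    refine ⟨fun i => ⟨hind i, ?_⟩, fun i j hij => ⟨?_, ?_⟩⟩
    · exact h 1 one_pos i i 1 (by push_cast; ring)
    · have hij' : (i : ℤ) < (j : ℤ) := by
        have := Fin.lt_def.mp hij; omega
      exact (hsub _ _).1 (h ((j : ℤ) - (i : ℤ)) (by omega) j i 0 (by push_cast; omega))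
    · have hij' : (i : ℤ) < (j : ℤ) := by
        have := Fin.lt_def.mp hij; omega
      exact h ((j : ℤ) - (i : ℤ) + 1) (by omega) j i 1 (by push_cast; omega)


end
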